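/- arXiv:2202.06191 — 5 statements merged into one kernel-verified Lean document; each statement's English description precedes it below -/
import Mathlib

section
/- Suppose for each arm a ∈ [n] and each state ψ in the (finite) support of a prior μ, a policy π satisfies π_a(ψ) ≥ ε/n for some ε ∈ [0,1], and π is BIR (its Bayesian-expected utility is at least the outside option V_out). Then the ε-greedy policy, which plays the best arm for ψ with probability 1−ε and uniformly at random with probability ε, is also BIR. Consequently the infimum over BIR state-aware policies of max over states and arms of 1/π_a(ψ) equals the infimum of n/ε over ε ≥ 0 for which ε-greedy is BIR. -/
/-!
Fix a state `ψ` and write `c = ε / n`. A policy with `π_a(ψ) ≥ c` spends its remaining mass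
`π_a(ψ) - c ≥ 0`, of total `1 - ε`, on arms whose utility is at most that of the best arm `a*_ψ`;
moving all of it onto `a*_ψ` yields the `ε`-greedy policy and can only raise the utility. Averaging
over `μ`, `ε`-greedy is BIR whenever such a policy is.

For the infima: a BIR policy with `max 1/π_a(ψ) = x` satisfies `x ≥ n` (some arm has mass at most
`1/n`) and `π_a(ψ) ≥ 1/x = (n/x)/n`, so `n/(n/x) = x` belongs to the second set; conversely
`ε`-greedy has all masses at least `ε/n`, so its value of `max 1/π_a(ψ)` is at most `n/ε`.
-/

open Finset

noncomputable def epsGreedy {ι : Type*} [Fintype ι] [DecidableEq ι] (ε : ℝ) (a₀ a : ι) : ℝ :=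
  (1 - ε) * (if a = a₀ then 1 else 0) + ε / Fintype.card ι

section EpsGreedy

variable {ι : Type*} [Fintype ι] [DecidableEq ι]

lemma sum_epsGreedy_mul (ε : ℝ) (a₀ : ι) (V : ι → ℝ) :
    ∑ a, epsGreedy ε a₀ a * V a = (1 - ε) * V a₀ + ∑ a, ε / Fintype.card ι * V a := by
  simp only [epsGreedy, add_mul, sum_add_distrib, mul_assoc, ite_mul, one_mul, zero_mul,
    ← mul_sum, sum_ite_eq', mem_univ, if_true]

lemma sum_epsGreedy [Nonempty ι] (ε : ℝ) (a₀ : ι) : ∑ a, epsGreedy ε a₀ a = 1 := by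
  have hcard : (Fintype.card ι : ℝ) ≠ 0 := Nat.cast_ne_zero.mpr Fintype.card_ne_zero
  simpa [card_univ, mul_div_cancel₀ ε hcard] using sum_epsGreedy_mul ε a₀ 1

lemma div_card_le_epsGreedy {ε : ℝ} (hε : ε ≤ 1) (a₀ a : ι) :
    ε / Fintype.card ι ≤ epsGreedy ε a₀ a := by
  have : 0 ≤ (1 - ε) * (if a = a₀ then (1 : ℝ) else 0) :=
    mul_nonneg (by linarith) (by split_ifs <;> norm_num)
  unfold epsGreedy
  linarith

lemma sum_mul_le_sum_epsGreedy_mul [Nonempty ι] {p V : ι → ℝ} {a₀ : ι} {ε : ℝ}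
    (hmax : ∀ a, V a ≤ V a₀) (hsum : ∑ a, p a = 1) (hlb : ∀ a, ε / Fintype.card ι ≤ p a) :
    ∑ a, p a * V a ≤ ∑ a, epsGreedy ε a₀ a * V a := by
  set c := ε / Fintype.card ι
  have hcard : (Fintype.card ι : ℝ) ≠ 0 := Nat.cast_ne_zero.mpr Fintype.card_ne_zero
  calc ∑ a, p a * V a = ∑ a, (p a - c) * V a + ∑ a, c * V a := by
        rw [← sum_add_distrib]
        exact sum_congr rfl fun a _ => by ring
    _ ≤ ∑ a, (p a - c) * V a₀ + ∑ a, c * V a := by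
        gcongr with a
        · linarith [hlb a]
        · exact hmax a
    _ = (1 - ε) * V a₀ + ∑ a, c * V a := by
        rw [← sum_mul, sum_sub_distrib, hsum, sum_const, card_univ, nsmul_eq_mul,
          mul_div_cancel₀ ε hcard]
    _ = ∑ a, epsGreedy ε a₀ a * V a := (sum_epsGreedy_mul ε a₀ V).symm

end EpsGreedy

lemma exists_le_inv_card_of_sum_eq_one {ι : Type*} [Fintype ι] [Nonempty ι] {p : ι → ℝ}
    (hsum : ∑ a, p a = 1) :
    ∃ a, p a ≤ (Fintype.card ι : ℝ)⁻¹ := by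
  have hcard : (Fintype.card ι : ℝ) ≠ 0 := Nat.cast_ne_zero.mpr Fintype.card_ne_zero
  obtain ⟨a, -, ha⟩ := exists_le_of_sum_le (s := univ) (f := p)
    (g := fun _ => (Fintype.card ι : ℝ)⁻¹) univ_nonempty (by simp [hsum, card_univ, hcard])
  exact ⟨a, ha⟩

section Policies

variable {Ψ ι : Type*} [Fintype Ψ] [Fintype ι]

def expectedUtility (μ : Ψ → ℝ) (V π : Ψ → ι → ℝ) : ℝ :=
  ∑ ψ, μ ψ * ∑ a, π ψ a * V ψ a

lemma expectedUtility_le_epsGreedy [DecidableEq ι] [Nonempty ι] {μ : Ψ → ℝ} {V p : Ψ → ι → ℝ}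
    {astar : Ψ → ι} {ε : ℝ} (hμ : ∀ ψ, 0 ≤ μ ψ) (hmax : ∀ ψ a, V ψ a ≤ V ψ (astar ψ))
    (hsum : ∀ ψ, ∑ a, p ψ a = 1) (hlb : ∀ ψ, μ ψ ≠ 0 → ∀ a, ε / Fintype.card ι ≤ p ψ a) :
    expectedUtility μ V p ≤ expectedUtility μ V fun ψ => epsGreedy ε (astar ψ) := by
  refine sum_le_sum fun ψ _ => ?_
  rcases eq_or_ne (μ ψ) 0 with h0 | h0
  · simp [h0]
  · exact mul_le_mul_of_nonneg_left
      (sum_mul_le_sum_epsGreedy_mul (hmax ψ) (hsum ψ) (hlb ψ h0)) (hμ ψ)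

end Policies

section MaxInvMass

variable {Ψ ι : Type*} [Fintype ι] [Nonempty ι]

noncomputable def maxInvMass {s : Finset Ψ} (hs : s.Nonempty) (p : Ψ → ι → ℝ) : ℝ :=
  s.sup' hs fun ψ => univ.sup' univ_nonempty fun a => 1 / p ψ a

variable {s : Finset Ψ} (hs : s.Nonempty) {p : Ψ → ι → ℝ}

lemma one_div_le_maxInvMass {ψ : Ψ} (hψ : ψ ∈ s) (a : ι) : 1 / p ψ a ≤ maxInvMass hs p :=
  le_sup'_of_le _ hψ (le_sup' (fun a => 1 / p ψ a) (mem_univ a))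

lemma card_le_maxInvMass (hpos : ∀ ψ a, 0 < p ψ a) (hsum : ∀ ψ, ∑ a, p ψ a = 1) :
    (Fintype.card ι : ℝ) ≤ maxInvMass hs p := by
  obtain ⟨ψ, hψ⟩ := hs
  obtain ⟨a, ha⟩ := exists_le_inv_card_of_sum_eq_one (hsum ψ)
  rw [← one_div] at ha
  exact ((le_one_div (by positivity) (hpos ψ a)).mpr ha).trans (one_div_le_maxInvMass _ hψ a)

lemma one_div_maxInvMass_le (hpos : ∀ ψ a, 0 < p ψ a) (hsum : ∀ ψ, ∑ a, p ψ a = 1)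
    {ψ : Ψ} (hψ : ψ ∈ s) (a : ι) : 1 / maxInvMass hs p ≤ p ψ a :=
  (one_div_le (hpos ψ a) ((Nat.cast_pos.mpr Fintype.card_pos).trans_le
    (card_le_maxInvMass hs hpos hsum))).mp (one_div_le_maxInvMass hs hψ a)

lemma maxInvMass_le_one_div {c : ℝ} (hc : 0 < c) (hlb : ∀ ψ a, c ≤ p ψ a) :
    maxInvMass hs p ≤ 1 / c :=
  sup'_le _ _ fun ψ _ => sup'_le _ _ fun a _ => one_div_le_one_div_of_le hc (hlb ψ a)

end MaxInvMass

theorem stmt3_general {Ψ : Type*} [Fintype Ψ] (n : ℕ) (hn : 0 < n)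
    (μ : Ψ → ℝ) (hμ0 : ∀ ψ, 0 ≤ μ ψ)
    (V : Ψ → Fin n → ℝ)
    (astar : Ψ → Fin n) (hastar : ∀ ψ a, V ψ a ≤ V ψ (astar ψ))
    (Vout : ℝ)
    (supp : Finset Ψ) (hsupp : supp = Finset.univ.filter (fun ψ => μ ψ ≠ 0))
    (hne : supp.Nonempty)
    (BIR : (Ψ → Fin n → ℝ) → Prop)
    (hBIRdef : ∀ π, BIR π ↔ Vout ≤ ∑ ψ, μ ψ * ∑ a, π ψ a * V ψ a)
    (greedy : ℝ → Ψ → Fin n → ℝ)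
    (hgreedy : ∀ ε ψ a,
      greedy ε ψ a = (1 - ε) * (if a = astar ψ then 1 else 0) + ε / n)
    (ε : ℝ)
    (π : Ψ → Fin n → ℝ)
    (hπdist : ∀ ψ, (∀ a, 0 ≤ π ψ a) ∧ ∑ a, π ψ a = 1)
    (hπlb : ∀ ψ ∈ supp, ∀ a, ε / n ≤ π ψ a)
    (hπBIR : BIR π) :
    BIR (greedy ε) ∧
    sInf {x : ℝ | ∃ π' : Ψ → Fin n → ℝ,
          (∀ ψ a, 0 < π' ψ a) ∧ (∀ ψ, ∑ a, π' ψ a = 1) ∧ BIR π' ∧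
          x = supp.sup' hne (fun ψ =>
                Finset.univ.sup' ⟨⟨0, hn⟩, Finset.mem_univ _⟩
                  (fun a => 1 / π' ψ a))}
      = sInf {x : ℝ | ∃ ε' : ℝ, 0 < ε' ∧ ε' ≤ 1 ∧ BIR (greedy ε') ∧
          x = n / ε'} := by
  have : Nonempty (Fin n) := ⟨⟨0, hn⟩⟩
  have hn0 : (0 : ℝ) < n := Nat.cast_pos.mpr hn
  have greedy_eq : ∀ ε, greedy ε = fun ψ => epsGreedy ε (astar ψ) := fun ε =>
    funext fun ψ => funext fun a => by rw [hgreedy, epsGreedy, Fintype.card_fin]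
  have greedy_BIR : ∀ (ε : ℝ) p, (∀ ψ, ∑ a, p ψ a = 1) →
      (∀ ψ ∈ supp, ∀ a, ε / (n : ℝ) ≤ p ψ a) → BIR p → BIR (greedy ε) := by
    intro ε p hsum hlb hp
    rw [hBIRdef] at hp
    rw [hBIRdef, greedy_eq]
    refine hp.trans (expectedUtility_le_epsGreedy hμ0 hastar hsum fun ψ hψ a => ?_)
    simpa using hlb ψ (by simp [hsupp, hψ]) a
  refine ⟨greedy_BIR ε π (fun ψ => (hπdist ψ).2) hπlb hπBIR,
    csInf_eq_csInf_of_forall_exists_le ?_ ?_⟩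
  · rintro _ ⟨p, hpos, hsum, hp, rfl⟩
    have hnx := card_le_maxInvMass hne hpos hsum
    rw [Fintype.card_fin] at hnx
    have hx0 := hn0.trans_le hnx
    refine ⟨_, ⟨n / maxInvMass hne p, div_pos hn0 hx0, (div_le_one hx0).mpr hnx, ?_,
      (div_div_cancel₀ hn0.ne').symm⟩, le_rfl⟩
    refine greedy_BIR _ p hsum (fun ψ hψ a => ?_) hp
    rw [div_div_cancel_left' hn0.ne', ← one_div]
    exact one_div_maxInvMass_le hne hpos hsum hψ a
  · rintro _ ⟨ε', hε'0, hε'1, hg, rfl⟩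
    have hlb : ∀ ψ a, ε' / n ≤ greedy ε' ψ a := fun ψ a => by
      simpa [greedy_eq] using div_card_le_epsGreedy hε'1 (astar ψ) a
    have hpos : ∀ ψ a, 0 < greedy ε' ψ a := fun ψ a => (div_pos hε'0 hn0).trans_le (hlb ψ a)
    refine ⟨_, ⟨greedy ε', hpos, fun ψ => by rw [greedy_eq, sum_epsGreedy], hg, rfl⟩, ?_⟩
    exact (maxInvMass_le_one_div hne (div_pos hε'0 hn0) hlb).trans_eq (one_div_div _ _)

theorem stmt3 {Ψ : Type*} [Fintype Ψ] (n : ℕ) (hn : 0 < n)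
    (μ : Ψ → ℝ) (hμ0 : ∀ ψ, 0 ≤ μ ψ) (hμ1 : ∑ ψ, μ ψ = 1)
    (V : Ψ → Fin n → ℝ) (hV : ∀ ψ a, V ψ a ∈ Set.Icc (0 : ℝ) 1)
    (astar : Ψ → Fin n) (hastar : ∀ ψ a, V ψ a ≤ V ψ (astar ψ))
    (Vout : ℝ)
    (supp : Finset Ψ) (hsupp : supp = Finset.univ.filter (fun ψ => μ ψ ≠ 0))
    (hne : supp.Nonempty)
    (BIR : (Ψ → Fin n → ℝ) → Prop)
    (hBIRdef : ∀ π, BIR π ↔ Vout ≤ ∑ ψ, μ ψ * ∑ a, π ψ a * V ψ a)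
    (greedy : ℝ → Ψ → Fin n → ℝ)
    (hgreedy : ∀ ε ψ a,
      greedy ε ψ a = (1 - ε) * (if a = astar ψ then 1 else 0) + ε / n)
    (ε : ℝ) (hε0 : 0 ≤ ε) (hε1 : ε ≤ 1)
    (π : Ψ → Fin n → ℝ)
    (hπdist : ∀ ψ, (∀ a, 0 ≤ π ψ a) ∧ ∑ a, π ψ a = 1)
    (hπlb : ∀ ψ ∈ supp, ∀ a, ε / n ≤ π ψ a)
    (hπBIR : BIR π) :
    BIR (greedy ε) ∧
    sInf {x : ℝ | ∃ π' : Ψ → Fin n → ℝ,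
          (∀ ψ a, 0 < π' ψ a) ∧ (∀ ψ, ∑ a, π' ψ a = 1) ∧ BIR π' ∧
          x = supp.sup' hne (fun ψ =>
                Finset.univ.sup' ⟨⟨0, hn⟩, Finset.mem_univ _⟩
                  (fun a => 1 / π' ψ a))}
      = sInf {x : ℝ | ∃ ε' : ℝ, 0 < ε' ∧ ε' ≤ 1 ∧ BIR (greedy ε') ∧
          x = n / ε'} :=
  stmt3_general n hn μ hμ0 V astar hastar Vout supp hsupp hne BIR hBIRdef greedy hgreedy ε π hπdist
    hπlb hπBIR
end

section
/- Let ε ∈ [0,1/2] and suppose the (2ε)-greedy policy with respect to the true state is BIR. Let π be a policy that plays some arm â(ψ) with probability 1−ε and uniform with probability ε, where for every state ψ, V_ψ(â(ψ)) ≥ V_ψ(a*_ψ) − δ' for some δ' ≥ 0 with δ' ≤ ε·g(μ). Then π is BIR. -/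
theorem stmt7 {Ψ : Type*} [Fintype Ψ] (n : ℕ) (hn : 0 < n)
    (μ : Ψ → ℝ) (hμ0 : ∀ ψ, 0 ≤ μ ψ) (hμ1 : ∑ ψ, μ ψ = 1)
    (V : Ψ → Fin n → ℝ) (hV : ∀ ψ a, V ψ a ∈ Set.Icc (0 : ℝ) 1)
    (astar : Ψ → Fin n) (hastar : ∀ ψ a, V ψ a ≤ V ψ (astar ψ))
    (g : ℝ)
    (hg : g = ∑ ψ, μ ψ * (V ψ (astar ψ) - (1 / n) * ∑ a, V ψ a))
    (Vout : ℝ)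
    (ε : ℝ) (hε0 : 0 ≤ ε) (hε1 : ε ≤ 1 / 2)
    (hgreedyBIR : Vout ≤
      ∑ ψ, μ ψ * ((1 - 2 * ε) * V ψ (astar ψ) + (2 * ε / n) * ∑ a, V ψ a))
    (ahat : Ψ → Fin n) (δ' : ℝ) (hδ'0 : 0 ≤ δ') (hδ'g : δ' ≤ ε * g)
    (hahat : ∀ ψ, V ψ (astar ψ) - δ' ≤ V ψ (ahat ψ)) :
    Vout ≤ ∑ ψ, μ ψ * ((1 - ε) * V ψ (ahat ψ) + (ε / n) * ∑ a, V ψ a) := by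
  have hd : δ' = ∑ ψ, μ ψ * δ' := by
    rw [← Finset.sum_mul, hμ1, one_mul]
  have hεg : ε * g = ∑ ψ, μ ψ * (ε * (V ψ (astar ψ) - (1 / n) * ∑ a, V ψ a)) := by
    rw [hg, Finset.mul_sum]
    exact Finset.sum_congr rfl (fun ψ _ => by ring)
  have key : (∑ ψ, μ ψ * ((1 - 2 * ε) * V ψ (astar ψ) + (2 * ε / n) * ∑ a, V ψ a))
      + (ε * g - δ') ≤ ∑ ψ, μ ψ * ((1 - ε) * V ψ (ahat ψ) + (ε / n) * ∑ a, V ψ a) := by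
    rw [hεg]
    nth_rewrite 1 [hd]
    rw [← Finset.sum_sub_distrib, ← Finset.sum_add_distrib]
    apply Finset.sum_le_sum
    intro ψ _
    have h1 := hahat ψ
    have h2 := hμ0 ψ
    have h3 : 0 ≤ (1 - ε) * V ψ (ahat ψ) - (1 - ε) * V ψ (astar ψ) + δ' := by
      nlinarith
    have h4 := mul_nonneg h2 h3
    have h5 : μ ψ * ((1 - ε) * V ψ (ahat ψ) + ε / ↑n * ∑ a, V ψ a)
        - (μ ψ * ((1 - 2 * ε) * V ψ (astar ψ) + 2 * ε / ↑n * ∑ a, V ψ a)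
          + (μ ψ * (ε * (V ψ (astar ψ) - 1 / ↑n * ∑ a, V ψ a)) - μ ψ * δ'))
        = μ ψ * ((1 - ε) * V ψ (ahat ψ) - (1 - ε) * V ψ (astar ψ) + δ') := by ring
    linarith
  have : 0 ≤ ε * g - δ' := by linarith
  linarith
end

section
/- Let S be a finite index set of size m and q : S → (0,1]. Partition S into S_L = {t : q_t ≤ 1/√m} and S_H = {t : q_t > 1/√m}, and suppose ∑_{t∈S} q_t ≤ m/b for some b ≥ 1. Then √m·|S_L| + ∑_{t∈S_H} 1/q_t ≥ √m·|S_L| + |S_H|²·b/m, and this quantity is at least (m/2)·min(b, √m) whenever b ≤ √m (since |S_L| + |S_H| = m implies max(|S_L|, |S_H|) ≥ m/2). -/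
open Classical in
theorem stmt8 {S : Type*} [Fintype S] (m : ℕ) (hm : m = Fintype.card S) (hm0 : 0 < m)
    (q : S → ℝ) (hq : ∀ t, 0 < q t ∧ q t ≤ 1) (b : ℝ) (hb : 1 ≤ b)
    (hsum : ∑ t, q t ≤ m / b) (hbm : b ≤ Real.sqrt m)
    (SL SH : Finset S)
    (hSL : SL = Finset.univ.filter (fun t => q t ≤ 1 / Real.sqrt m))
    (hSH : SH = Finset.univ.filter (fun t => 1 / Real.sqrt m < q t)) :
    Real.sqrt m * SL.card + (SH.card : ℝ) ^ 2 * b / m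
      ≤ Real.sqrt m * SL.card + ∑ t ∈ SH, 1 / q t ∧
    (m : ℝ) / 2 * min b (Real.sqrt m)
      ≤ Real.sqrt m * SL.card + (SH.card : ℝ) ^ 2 * b / m := by
  have hmpos : (0:ℝ) < m := by exact_mod_cast hm0
  have hb0 : (0:ℝ) < b := lt_of_lt_of_le one_pos hb
  have hs : (0:ℝ) < Real.sqrt m := Real.sqrt_pos.mpr hmpos
  -- cardinalities
  have hcard : (SL.card : ℝ) + SH.card = m := by
    have h := Finset.card_filter_add_card_filter_not
      (s := (Finset.univ : Finset S)) (p := fun t => q t ≤ 1 / Real.sqrt m)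
    simp only [not_le] at h
    rw [hSL, hSH]
    rw [Finset.card_univ, ← hm] at h
    exact_mod_cast h
  -- Cauchy-Schwarz
  have hcs : (SH.card : ℝ) ^ 2 ≤ (∑ t ∈ SH, q t) * (∑ t ∈ SH, 1 / q t) := by
    have h := Finset.sum_mul_sq_le_sq_mul_sq SH
      (fun t => Real.sqrt (q t)) (fun t => Real.sqrt (1 / q t))
    have h1 : ∀ t ∈ SH, Real.sqrt (q t) * Real.sqrt (1 / q t) = 1 := by
      intro t _
      rw [← Real.sqrt_mul (le_of_lt (hq t).1)]
      rw [mul_one_div, div_self (ne_of_gt (hq t).1), Real.sqrt_one]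
    rw [Finset.sum_congr rfl h1] at h
    simp only [Finset.sum_const, nsmul_eq_mul, mul_one] at h
    have h2 : ∀ t ∈ SH, Real.sqrt (q t) ^ 2 = q t := fun t _ =>
      Real.sq_sqrt (le_of_lt (hq t).1)
    have h3 : ∀ t ∈ SH, Real.sqrt (1 / q t) ^ 2 = 1 / q t := fun t _ =>
      Real.sq_sqrt (le_of_lt (one_div_pos.mpr (hq t).1))
    rwa [Finset.sum_congr rfl h2, Finset.sum_congr rfl h3] at h
  have hsumH : ∑ t ∈ SH, q t ≤ m / b := by
    refine le_trans ?_ hsum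
    apply Finset.sum_le_sum_of_subset_of_nonneg (Finset.subset_univ _)
    exact fun t _ _ => le_of_lt (hq t).1
  have hT : 0 ≤ ∑ t ∈ SH, 1 / q t :=
    Finset.sum_nonneg fun t _ => le_of_lt (one_div_pos.mpr (hq t).1)
  have hcs2 : (SH.card : ℝ) ^ 2 ≤ (m / b) * (∑ t ∈ SH, 1 / q t) := by
    calc (SH.card : ℝ) ^ 2 ≤ (∑ t ∈ SH, q t) * (∑ t ∈ SH, 1 / q t) := hcs
    _ ≤ (m / b) * (∑ t ∈ SH, 1 / q t) := by
        apply mul_le_mul_of_nonneg_right hsumH hT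
  constructor
  · have key : (SH.card : ℝ) ^ 2 * b ≤ m * (∑ t ∈ SH, 1 / q t) := by
      have h := mul_le_mul_of_nonneg_left hcs2 (le_of_lt hb0)
      have e : b * ((m : ℝ) / b * ∑ t ∈ SH, 1 / q t) = m * ∑ t ∈ SH, 1 / q t := by
        field_simp
      rw [e] at h
      linarith
    have : (SH.card : ℝ) ^ 2 * b / m ≤ ∑ t ∈ SH, 1 / q t := by
      rw [div_le_iff₀ hmpos]
      linarith [mul_comm (m : ℝ) (∑ t ∈ SH, 1 / q t)]
    linarith
  · rw [min_eq_left hbm]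
    have hL0 : (0:ℝ) ≤ SL.card := Nat.cast_nonneg _
    have hH0 : (0:ℝ) ≤ SH.card := Nat.cast_nonneg _
    have h1 : b * SL.card ≤ Real.sqrt m * SL.card :=
      mul_le_mul_of_nonneg_right hbm hL0
    have h2 : (m:ℝ) / 2 * b ≤ b * SL.card + (SH.card : ℝ) ^ 2 * b / m := by
      have hT : (SH.card : ℝ) ^ 2 * b / m * m = (SH.card : ℝ) ^ 2 * b := by
        field_simp
      nlinarith [sq_nonneg ((SH.card : ℝ) - m / 2), mul_pos hb0 hmpos,
        mul_le_mul_of_nonneg_left (sq_nonneg ((SH.card : ℝ) - m / 2)) (le_of_lt hb0)]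
    linarith
end

section
/- For δ ∈ [0, 1/(2√2)], the KL divergence between Bernoulli(1/2+δ) and Bernoulli(1/2) satisfies (1/2+δ)·log(1+2δ) + (1/2−δ)·log(1−2δ) ≤ 4δ². -/
lemma log_one_sub_le_aux {x : ℝ} (hx0 : 0 ≤ x) (hx1 : x < 1) :
    Real.log (1 - x) ≤ -x - x ^ 2 / 2 := by
  set f : ℝ → ℝ := fun t => Real.log (1 - t) + t + t ^ 2 / 2 with hf
  have hcont : ContinuousOn f (Set.Icc 0 x) := by
    apply ContinuousOn.add
    apply ContinuousOn.add
    · apply Real.continuousOn_log.comp ((continuous_const.sub continuous_id).continuousOn)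
      intro t ht
      have : 1 - t > 0 := by
        have := ht.2
        simp only [Set.mem_Icc] at ht
        linarith [ht.2, hx1]
      simp [ne_of_gt this]
    · exact continuousOn_id
    · exact (continuous_pow 2).continuousOn.div_const 2
  have hderiv : ∀ t ∈ interior (Set.Icc (0:ℝ) x),
      HasDerivAt f ((1 - t)⁻¹ * (-1) + 1 + t) t := by
    intro t ht
    rw [interior_Icc, Set.mem_Ioo] at ht
    have hne : (1 : ℝ) - t ≠ 0 := by intro h; nlinarith [ht.1, ht.2]
    have h1 : HasDerivAt (fun t : ℝ => 1 - t) (-1) t := by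
      simpa using (hasDerivAt_id t).const_sub 1
    have h2 : HasDerivAt (fun t : ℝ => Real.log (1 - t)) ((1 - t)⁻¹ * (-1)) t :=
      (Real.hasDerivAt_log hne).comp t h1
    have h3 : HasDerivAt (fun t : ℝ => t ^ 2 / 2) t t := by
      have := (hasDerivAt_pow 2 t).div_const 2
      simpa using this
    exact (h2.add (hasDerivAt_id t)).add h3
  have hanti : AntitoneOn f (Set.Icc 0 x) := by
    apply antitoneOn_of_deriv_nonpos (convex_Icc 0 x) hcont
    · intro t ht
      exact ((hderiv t ht).differentiableAt).differentiableWithinAt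
    · intro t ht
      rw [(hderiv t ht).deriv]
      rw [interior_Icc, Set.mem_Ioo] at ht
      have h1t : 0 < 1 - t := by linarith [ht.2, hx1]
      have : (1 - t)⁻¹ * (-1) + 1 + t = -(t ^ 2) / (1 - t) := by
        field_simp
        ring
      rw [this]
      apply div_nonpos_of_nonpos_of_nonneg
      · nlinarith [sq_nonneg t]
      · linarith
  have h0mem : (0:ℝ) ∈ Set.Icc (0:ℝ) x := Set.mem_Icc.2 ⟨le_refl 0, hx0⟩
  have hxmem : x ∈ Set.Icc (0:ℝ) x := Set.mem_Icc.2 ⟨hx0, le_refl x⟩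
  have := hanti h0mem hxmem hx0
  simp only [hf] at this
  simp at this
  linarith

theorem stmt10 (δ : ℝ) (h0 : 0 ≤ δ) (h1 : δ ≤ 1 / (2 * Real.sqrt 2)) :
    (1 / 2 + δ) * Real.log (1 + 2 * δ) + (1 / 2 - δ) * Real.log (1 - 2 * δ)
      ≤ 4 * δ ^ 2 := by
  have hs : (1:ℝ) < Real.sqrt 2 := by
    nlinarith [Real.sq_sqrt (by norm_num : (2:ℝ) ≥ 0), Real.sqrt_nonneg 2]
  have hδ : δ < 1 / 2 := by
    have h2 : 1 / (2 * Real.sqrt 2) < 1 / 2 := by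
      apply div_lt_div_of_pos_left <;> nlinarith
    linarith
  have hx1 : 2 * δ < 1 := by linarith
  have hlog1 : Real.log (1 + 2 * δ) ≤ 2 * δ := by
    have := Real.log_le_sub_one_of_pos (show (0:ℝ) < 1 + 2 * δ by linarith)
    linarith
  have hlog2 : Real.log (1 - 2 * δ) ≤ -(2 * δ) - (2 * δ) ^ 2 / 2 :=
    log_one_sub_le_aux (by linarith) hx1
  have hb1 : (1 / 2 + δ) * Real.log (1 + 2 * δ) ≤ (1 / 2 + δ) * (2 * δ) := by
    apply mul_le_mul_of_nonneg_left hlog1; linarith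
  have hb2 : (1 / 2 - δ) * Real.log (1 - 2 * δ)
      ≤ (1 / 2 - δ) * (-(2 * δ) - (2 * δ) ^ 2 / 2) := by
    apply mul_le_mul_of_nonneg_left hlog2; linarith
  nlinarith [hb1, hb2, sq_nonneg δ]
end

section
/- (Superadditivity of the benchmark over mixtures) For type distributions F_good, F_bad on a finite type set and ε ∈ [0,1], let F_ε = (1−ε)·F_good + ε·F_bad. Then b(μ, F_ε) ≥ (1−ε)·b(μ, F_good) + ε·b(μ, F_bad), where b(μ,F) = inf over BIC, BIR state-aware policies π of sup_{ψ ∈ supp(μ), a ∈ [n]} E_{θ∼F}[1/π_a(ψ,θ)]. -/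
theorem stmt15 {Θ Ψ : Type*} [Fintype Θ] [Nonempty Θ] [Fintype Ψ]
    (n : ℕ) (hn : 0 < n)
    (supp : Finset Ψ) (hsupp : supp.Nonempty)
    (Feas : (Ψ → Θ → Fin n → ℝ) → Prop)
    (hFeasPos : ∀ π, Feas π → ∀ ψ θ a, 0 < π ψ θ a)
    (Fgood Fbad : Θ → ℝ)
    (hg0 : ∀ θ, 0 ≤ Fgood θ) (hg1 : ∑ θ, Fgood θ = 1)
    (hb0 : ∀ θ, 0 ≤ Fbad θ) (hb1 : ∑ θ, Fbad θ = 1)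
    (ε : ℝ) (hε0 : 0 ≤ ε) (hε1 : ε ≤ 1)
    (Fε : Θ → ℝ) (hFε : ∀ θ, Fε θ = (1 - ε) * Fgood θ + ε * Fbad θ)
    (val : (Ψ → Θ → Fin n → ℝ) → (Θ → ℝ) → ℝ)
    (hval : ∀ π G, val π G = supp.sup' hsupp (fun ψ =>
        Finset.univ.sup' ⟨⟨0, hn⟩, Finset.mem_univ _⟩
          (fun a => ∑ θ, G θ * (1 / π ψ θ a))))
    (b : (Θ → ℝ) → ℝ)
    (hb : ∀ G, b G = sInf {x : ℝ | ∃ π, Feas π ∧ x = val π G}) :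
    max ((1 - ε) * b Fgood) (ε * b Fbad) ≤ b Fε := by
  have hε1' : 0 ≤ 1 - ε := by linarith
  -- nonnegativity of val for nonneg G
  have hval_nonneg : ∀ π, Feas π → ∀ G : Θ → ℝ, (∀ θ, 0 ≤ G θ) → 0 ≤ val π G := by
    intro π hπ G hG
    rw [hval]
    obtain ⟨ψ, hψ⟩ := hsupp
    refine le_trans ?_ (Finset.le_sup' _ hψ)
    refine le_trans ?_ (Finset.le_sup' _ (Finset.mem_univ (⟨0, hn⟩ : Fin n)))
    exact Finset.sum_nonneg fun θ _ => mul_nonneg (hG θ)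
      (one_div_nonneg.mpr (hFeasPos π hπ ψ θ _).le)
  -- key: c * val π F ≤ val π Fε for the two components
  have key : ∀ π, Feas π →
      (1 - ε) * val π Fgood ≤ val π Fε ∧ ε * val π Fbad ≤ val π Fε := by
    intro π hπ
    have hpos : ∀ ψ θ a, (0:ℝ) ≤ 1 / π ψ θ a :=
      fun ψ θ a => one_div_nonneg.mpr (hFeasPos π hπ ψ θ a).le
    have main : ∀ (c : ℝ) (F F' : Θ → ℝ), 0 ≤ c → (∀ θ, 0 ≤ F' θ) →
        (∀ θ, Fε θ = c * F θ + F' θ) → c * val π F ≤ val π Fε := by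
      intro c F F' hc hF' hmix
      rw [hval π F, hval π Fε]
      obtain ⟨ψ, hψ, hψeq⟩ := Finset.exists_mem_eq_sup' hsupp
        (fun ψ => Finset.univ.sup' ⟨⟨0, hn⟩, Finset.mem_univ _⟩
          (fun a => ∑ θ, F θ * (1 / π ψ θ a)))
      rw [hψeq]
      obtain ⟨a, _, haeq⟩ := Finset.exists_mem_eq_sup'
        (⟨⟨0, hn⟩, Finset.mem_univ _⟩ : (Finset.univ : Finset (Fin n)).Nonempty)
        (fun a => ∑ θ, F θ * (1 / π ψ θ a))
      rw [haeq]
      have h1 : (∑ θ, Fε θ * (1 / π ψ θ a)) ≤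
          Finset.univ.sup' ⟨⟨0, hn⟩, Finset.mem_univ _⟩
            (fun a => ∑ θ, Fε θ * (1 / π ψ θ a)) :=
        Finset.le_sup' (fun a => ∑ θ, Fε θ * (1 / π ψ θ a)) (Finset.mem_univ a)
      have h2 := Finset.le_sup' (f := fun ψ => Finset.univ.sup' ⟨⟨0, hn⟩, Finset.mem_univ _⟩
          (fun a => ∑ θ, Fε θ * (1 / π ψ θ a))) hψ
      refine le_trans ?_ (le_trans h1 h2)
      calc c * ∑ θ, F θ * (1 / π ψ θ a)
          = ∑ θ, c * F θ * (1 / π ψ θ a) := by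
            rw [Finset.mul_sum]; apply Finset.sum_congr rfl; intros; ring
        _ ≤ ∑ θ, Fε θ * (1 / π ψ θ a) := by
            apply Finset.sum_le_sum
            intro θ _
            rw [hmix θ]
            have : 0 ≤ F' θ * (1 / π ψ θ a) := mul_nonneg (hF' θ) (hpos ψ θ a)
            nlinarith [hpos ψ θ a]
    constructor
    · exact main (1 - ε) Fgood (fun θ => ε * Fbad θ) hε1'
        (fun θ => mul_nonneg hε0 (hb0 θ)) (fun θ => hFε θ)
    · exact main ε Fbad (fun θ => (1 - ε) * Fgood θ) hε0
        (fun θ => mul_nonneg hε1' (hg0 θ)) (fun θ => by rw [hFε θ]; ring)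
  by_cases hne : ∃ π, Feas π
  · obtain ⟨π₀, hπ₀⟩ := hne
    have hSne : ∀ G : Θ → ℝ, {x : ℝ | ∃ π, Feas π ∧ x = val π G}.Nonempty :=
      fun G => ⟨val π₀ G, π₀, hπ₀, rfl⟩
    have hBdd : ∀ G : Θ → ℝ, (∀ θ, 0 ≤ G θ) →
        BddBelow {x : ℝ | ∃ π, Feas π ∧ x = val π G} := by
      intro G hG
      exact ⟨0, fun x ⟨π, hπ, hx⟩ => hx ▸ hval_nonneg π hπ G hG⟩
    rw [hb Fε]
    apply le_csInf (hSne Fε)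
    rintro x ⟨π, hπ, rfl⟩
    apply max_le
    · calc (1 - ε) * b Fgood ≤ (1 - ε) * val π Fgood := by
            apply mul_le_mul_of_nonneg_left _ hε1'
            rw [hb Fgood]
            exact csInf_le (hBdd Fgood hg0) ⟨π, hπ, rfl⟩
        _ ≤ val π Fε := (key π hπ).1
    · calc ε * b Fbad ≤ ε * val π Fbad := by
            apply mul_le_mul_of_nonneg_left _ hε0
            rw [hb Fbad]
            exact csInf_le (hBdd Fbad hb0) ⟨π, hπ, rfl⟩
        _ ≤ val π Fε := (key π hπ).2
  · have hempty : ∀ G : Θ → ℝ, {x : ℝ | ∃ π, Feas π ∧ x = val π G} = ∅ := by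
      intro G
      ext x
      simp only [Set.mem_setOf_eq, Set.mem_empty_iff_false, iff_false]
      rintro ⟨π, hπ, -⟩
      exact hne ⟨π, hπ⟩
    simp [hb, hempty, Real.sInf_empty]
end
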